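/- arXiv:1107.4020 — 2 statements merged into one kernel-verified Lean document; each statement's English description precedes it below -/
import Mathlib

section
/- Consider a doubly reflected BSDE solution $(Y,Z,A)$ with barriers $L\le U$, where $A=K^+-K^-$ is the orthogonal decomposition into nondecreasing processes, satisfying the minimality (Skorokhod) conditions $[Y_{t-}-L_{t-}]dK^+_t = [U_{t-}-Y_{t-}]dK^-_t=0$ and $L\le Y\le U$. Then the jumps of $K^+$ and $K^-$ are controlled by the jumps of the barriers: $\sum_{0<t\le T}\Delta K^+_t \le \sum_{0<t\le T}[\Delta L_t]^-$ and $\sum_{0<t\le T}\Delta K^-_t \le \sum_{0<t\le T}[\Delta U_t]^+$, where $\Delta L_t = L_t-L_{t-}$ and $x^-=\max(-x,0)$, $x^+=\max(x,0)$. -/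
open Set Function

/-- Primed quantities are left limits. A push `d > 0` of the lower reflection happens when `y`
sits on the lower barrier just before and the upper push `e` is idle, so `y` lands at `l' - d`;
staying above `l` caps `d` by the drop `l' - l` of the barrier. -/
theorem skorokhod_jump_le_drop {d e y y' l l' : ℝ} (he : 0 ≤ e) (hdisj : ¬(0 < d ∧ 0 < e))
    (hjump : y - y' = -d + e) (hmin : 0 < d → y' = l') (hl : l ≤ y) :
    d ≤ max (-(l - l')) 0 := by
  rcases le_or_gt d 0 with hd | hd
  · exact hd.trans (le_max_right _ _)
  · have he0 : e = 0 := le_antisymm (not_lt.mp fun he' => hdisj ⟨hd, he'⟩) he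
    have hy' := hmin hd
    subst he0 hy'
    exact le_max_of_le_left (by linarith)

theorem skorokhod_jump_le_rise {d e y y' u u' : ℝ} (hd : 0 ≤ d) (hdisj : ¬(0 < d ∧ 0 < e))
    (hjump : y - y' = -d + e) (hmin : 0 < e → y' = u') (hu : y ≤ u) :
    e ≤ max (u - u') 0 := by
  -- negating `y` and `u` swaps the roles of the two reflections
  have key := skorokhod_jump_le_drop (y := -y) (y' := -y') (l := -u) (l' := -u') hd
    (fun h => hdisj h.symm) (by linarith) (fun he => by rw [hmin he]) (neg_le_neg hu)
  rwa [neg_sub, sub_neg_eq_add, neg_add_eq_sub] at key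

theorem stmt11_general (T : ℝ)
    (y l u kp km : ℝ → ℝ)
    (hkp : Monotone kp) (hkm : Monotone km)
    -- jumps of `y` come only from `A = k⁺ - k⁻` (continuous martingale part)
    (hjump : ∀ t ∈ Ioc (0 : ℝ) T,
      y t - leftLim y t = -(kp t - leftLim kp t) + (km t - leftLim km t))
    -- orthogonality: `k⁺` and `k⁻` never jump together
    (hdisj : ∀ t ∈ Ioc (0 : ℝ) T,
      ¬(leftLim kp t < kp t ∧ leftLim km t < km t))
    -- Skorokhod minimality at jump times
    (hminp : ∀ t ∈ Ioc (0 : ℝ) T, leftLim kp t < kp t → leftLim y t = leftLim l t)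
    (hminm : ∀ t ∈ Ioc (0 : ℝ) T, leftLim km t < km t → leftLim y t = leftLim u t)
    -- barriers
    (hbar : ∀ t ∈ Icc (0 : ℝ) T, l t ≤ y t ∧ y t ≤ u t) :
    (∑' t : (Ioc (0 : ℝ) T), ENNReal.ofReal (kp (t : ℝ) - leftLim kp (t : ℝ))) ≤
        (∑' t : (Ioc (0 : ℝ) T),
          ENNReal.ofReal (max (-(l (t : ℝ) - leftLim l (t : ℝ))) 0)) ∧
      (∑' t : (Ioc (0 : ℝ) T), ENNReal.ofReal (km (t : ℝ) - leftLim km (t : ℝ))) ≤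
        (∑' t : (Ioc (0 : ℝ) T),
          ENNReal.ofReal (max (u (t : ℝ) - leftLim u (t : ℝ)) 0)) := by
  have hdisj' (t) (ht : t ∈ Ioc (0 : ℝ) T) :
      ¬(0 < kp t - leftLim kp t ∧ 0 < km t - leftLim km t) := by
    simpa only [sub_pos] using hdisj t ht
  have hbar' (t) (ht : t ∈ Ioc (0 : ℝ) T) := hbar t (Ioc_subset_Icc_self ht)
  constructor
  all_goals refine ENNReal.tsum_le_tsum fun ⟨t, ht⟩ => ENNReal.ofReal_le_ofReal ?_
  · exact skorokhod_jump_le_drop (sub_nonneg.mpr (hkm.leftLim_le le_rfl)) (hdisj' t ht)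
      (hjump t ht) (fun h => hminp t ht (sub_pos.mp h)) (hbar' t ht).1
  · exact skorokhod_jump_le_rise (sub_nonneg.mpr (hkp.leftLim_le le_rfl)) (hdisj' t ht)
      (hjump t ht) (fun h => hminm t ht (sub_pos.mp h)) (hbar' t ht).2

/-- pathwise form: for a doubly reflected BSDE solution path `y` with
barriers `l ≤ u`, nondecreasing `k⁺, k⁻` with disjoint jumps, jump relation
`Δy = -Δk⁺ + Δk⁻`, and Skorokhod minimality at jump times, the jumps of `k⁺` (resp. `k⁻`)
are dominated by the negative jumps of `l` (resp. positive jumps of `u`):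
`∑_{0<t≤T} Δk⁺_t ≤ ∑_{0<t≤T} [Δl_t]⁻` and `∑_{0<t≤T} Δk⁻_t ≤ ∑_{0<t≤T} [Δu_t]⁺`. -/
theorem stmt11 (T : ℝ) (hT : 0 < T)
    (y l u kp km : ℝ → ℝ)
    (hkp : Monotone kp) (hkm : Monotone km)
    (hkp0 : kp 0 = 0) (hkm0 : km 0 = 0)
    -- jumps of `y` come only from `A = k⁺ - k⁻` (continuous martingale part)
    (hjump : ∀ t ∈ Ioc (0 : ℝ) T,
      y t - leftLim y t = -(kp t - leftLim kp t) + (km t - leftLim km t))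
    -- orthogonality: `k⁺` and `k⁻` never jump together
    (hdisj : ∀ t ∈ Ioc (0 : ℝ) T,
      ¬(leftLim kp t < kp t ∧ leftLim km t < km t))
    -- Skorokhod minimality at jump times
    (hminp : ∀ t ∈ Ioc (0 : ℝ) T, leftLim kp t < kp t → leftLim y t = leftLim l t)
    (hminm : ∀ t ∈ Ioc (0 : ℝ) T, leftLim km t < km t → leftLim y t = leftLim u t)
    -- barriers
    (hbar : ∀ t ∈ Icc (0 : ℝ) T, l t ≤ y t ∧ y t ≤ u t) :
    (∑' t : (Ioc (0 : ℝ) T), ENNReal.ofReal (kp (t : ℝ) - leftLim kp (t : ℝ))) ≤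
        (∑' t : (Ioc (0 : ℝ) T),
          ENNReal.ofReal (max (-(l (t : ℝ) - leftLim l (t : ℝ))) 0)) ∧
      (∑' t : (Ioc (0 : ℝ) T), ENNReal.ofReal (km (t : ℝ) - leftLim km (t : ℝ))) ≤
        (∑' t : (Ioc (0 : ℝ) T),
          ENNReal.ofReal (max (u (t : ℝ) - leftLim u (t : ℝ)) 0)) :=
  stmt11_general T y l u kp km hkp hkm hjump hdisj hminp hminm hbar
end

section
/- Let $\mathcal{P}$ be a family of probability measures on $(\Omega,\mathcal{F},\mathbb{F})$ satisfying: for every $\mathbb{P}\in\mathcal{P}$, stopping time $\tau$, measures $\mathbb{P}_1,\mathbb{P}_2\in\mathcal{P}(\tau,\mathbb{P}):=\{\mathbb{P}'\in\mathcal{P}: \mathbb{P}'=\mathbb{P}\text{ on }\mathcal{F}_\tau\}$, and any $\mathcal{F}_\tau$-measurable partition $E_1,E_2$ of $\Omega$, the pasted measure $\bar{\mathbb{P}}(E):=\mathbb{P}_1(E\cap E_1)+\mathbb{P}_2(E\cap E_2)$ belongs to $\mathcal{P}(\tau,\mathbb{P})$. Then for any integrable $\xi$, any $\mathbb{P}'\in\mathcal{P}$,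 stopping time $\tau$, and $\mathbb{P}^1,\mathbb{P}^2\in\mathcal{P}(\tau,\mathbb{P}')$, there exists $\tilde{\mathbb{P}}\in\mathcal{P}(\tau,\mathbb{P}')$ such that $\mathbb{E}^{\tilde{\mathbb{P}}}_\tau[\xi] = \mathbb{E}^{\mathbb{P}^1}_\tau[\xi]\vee\mathbb{E}^{\mathbb{P}^2}_\tau[\xi]$, $\mathbb{P}'$-a.s. -/
open MeasureTheory Set
open scoped ENNReal

noncomputable section

variable {Ω : Type} {m : MeasurableSpace Ω}

/-- `Pfam(τ, P)`: the members of `Pfam` that agree with `P` on `F_τ`. -/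
def MeasSet (Pfam : Set (Measure Ω)) {F : Filtration ℝ m} {τ : Ω → ℝ}
    (hτ : IsStoppingTime F (fun ω => (τ ω : WithTop ℝ))) (P : Measure Ω) : Set (Measure Ω) :=
  {P' ∈ Pfam | ∀ s : Set Ω, MeasurableSet[hτ.measurableSpace] s → P' s = P s}

/-- Stability of `Pfam` under pasting along stopping times. -/
def StableUnderPasting (F : Filtration ℝ m) (Pfam : Set (Measure Ω)) : Prop :=
  ∀ P ∈ Pfam, ∀ (τ : Ω → ℝ) (hτ : IsStoppingTime F (fun ω => (τ ω : WithTop ℝ))),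
    ∀ P1 ∈ MeasSet Pfam hτ P, ∀ P2 ∈ MeasSet Pfam hτ P, ∀ E1 : Set Ω,
      MeasurableSet[hτ.measurableSpace] E1 →
      (P1.restrict E1 + P2.restrict E1ᶜ) ∈ MeasSet Pfam hτ P

/-! On `E = {E^{P¹}_τ[ξ] ≥ E^{P²}_τ[ξ]} ∈ F_τ` the pasted measure `P̃ = P¹ on E, P² on Eᶜ` has
conditional expectation `E^{P¹}_τ[ξ]`, and off `E` it has `E^{P²}_τ[ξ]`, because the integral over
any `F_τ`-set splits along `E`. So `E^{P̃}_τ[ξ]` is the maximum `P̃`-a.s.; as both sides are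
`F_τ`-measurable and `P̃ = P'` on `F_τ`, this holds `P'`-a.s. as well. -/

section Pasting

variable {α F : Type*} {m m0 : MeasurableSpace α} [NormedAddCommGroup F]
  {μ ν : Measure α} {E s : Set α} {f g : α → F}

theorem restrict_restrict_add_restrict_compl (hs : MeasurableSet s) :
    (μ.restrict E + ν.restrict Eᶜ).restrict s = μ.restrict (s ∩ E) + ν.restrict (s ∩ Eᶜ) := by
  rw [Measure.restrict_add, Measure.restrict_restrict hs, Measure.restrict_restrict hs]

variable [DecidablePred (· ∈ E)]

theorem integrableOn_piecewise_restrict_add_restrict_compl (hE : MeasurableSet E)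
    (hs : MeasurableSet s) (hf : IntegrableOn f (s ∩ E) μ) (hg : IntegrableOn g (s ∩ Eᶜ) ν) :
    IntegrableOn (E.piecewise f g) s (μ.restrict E + ν.restrict Eᶜ) := by
  rw [IntegrableOn, restrict_restrict_add_restrict_compl hs, integrable_add_measure]
  exact ⟨hf.congr_fun (fun x hx => (E.piecewise_eq_of_mem f g hx.2).symm) (hs.inter hE),
    hg.congr_fun (fun x hx => (E.piecewise_eq_of_notMem f g hx.2).symm) (hs.inter hE.compl)⟩

theorem setIntegral_piecewise_restrict_add_restrict_compl [NormedSpace ℝ F] (hE : MeasurableSet E)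
    (hs : MeasurableSet s) (hf : IntegrableOn f (s ∩ E) μ) (hg : IntegrableOn g (s ∩ Eᶜ) ν) :
    ∫ x in s, E.piecewise f g x ∂(μ.restrict E + ν.restrict Eᶜ) =
      ∫ x in s ∩ E, f x ∂μ + ∫ x in s ∩ Eᶜ, g x ∂ν := by
  have h := integrableOn_piecewise_restrict_add_restrict_compl hE hs hf hg
  rw [IntegrableOn, restrict_restrict_add_restrict_compl hs, integrable_add_measure] at h
  rw [restrict_restrict_add_restrict_compl hs, integral_add_measure h.1 h.2,
    setIntegral_congr_fun (hs.inter hE) fun x hx => E.piecewise_eq_of_mem f g hx.2,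
    setIntegral_congr_fun (hs.inter hE.compl) fun x hx => E.piecewise_eq_of_notMem f g hx.2]

theorem condExp_restrict_add_restrict_compl [NormedSpace ℝ F] [CompleteSpace F] (hm : m ≤ m0)
    [IsFiniteMeasure μ] [IsFiniteMeasure ν] {ξ : α → F} (hμ : Integrable ξ μ)
    (hν : Integrable ξ ν) (hE : MeasurableSet[m] E) :
    E.piecewise (μ[ξ|m]) (ν[ξ|m]) =ᵐ[μ.restrict E + ν.restrict Eᶜ]
      (μ.restrict E + ν.restrict Eᶜ)[ξ|m] := by
  have hE' : MeasurableSet E := hm E hE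
  refine ae_eq_condExp_of_forall_setIntegral_eq hm
    (integrable_add_measure.2 ⟨hμ.restrict, hν.restrict⟩)
    (fun s hs _ => integrableOn_piecewise_restrict_add_restrict_compl hE' (hm s hs)
      integrable_condExp.integrableOn integrable_condExp.integrableOn)
    (fun s hs _ => ?_)
    (stronglyMeasurable_condExp.piecewise hE stronglyMeasurable_condExp).aestronglyMeasurable
  rw [setIntegral_piecewise_restrict_add_restrict_compl hE' (hm s hs)
      integrable_condExp.integrableOn integrable_condExp.integrableOn,
    setIntegral_condExp hm hμ (hs.inter hE), setIntegral_condExp hm hν (hs.inter hE.compl),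
    ← setIntegral_piecewise_restrict_add_restrict_compl hE' (hm s hs) hμ.integrableOn
      hν.integrableOn, E.piecewise_same]

end Pasting

theorem ae_eq_of_forall_measurableSet_eq {α β : Type*} [TopologicalSpace β]
    [TopologicalSpace.MetrizableSpace β] {m m0 : MeasurableSpace α} (hm : m ≤ m0)
    {μ ν : Measure α} (hμν : ∀ s, MeasurableSet[m] s → μ s = ν s) {f g : α → β}
    (hf : StronglyMeasurable[m] f) (hg : StronglyMeasurable[m] g) (hfg : f =ᵐ[μ] g) :
    f =ᵐ[ν] g := by
  have htrim : μ.trim hm = ν.trim hm := @Measure.ext _ m _ _ fun s hs => by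
    rw [trim_measurableSet_eq hm hs, trim_measurableSet_eq hm hs, hμν s hs]
  rw [← hf.ae_eq_trim_iff hm hg, ← htrim, hf.ae_eq_trim_iff hm hg]
  exact hfg

theorem max_eq_piecewise_le {α β : Type*} [LinearOrder β] (f g : α → β) :
    (fun x => max (f x) (g x)) = {x | g x ≤ f x}.piecewise f g := by
  classical
  funext x
  by_cases h : g x ≤ f x
  · simp [h]
  · simp [h, (lt_of_not_ge h).le]

/-- under stability under pasting, for any integrable `ξ`, `P' ∈ Pfam`,
stopping time `τ` and `P¹, P² ∈ Pfam(τ, P')`, there is `P̃ ∈ Pfam(τ, P')` with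
`E^{P̃}_τ[ξ] = E^{P¹}_τ[ξ] ∨ E^{P²}_τ[ξ]`, `P'`-a.s. -/
theorem stmt12 (F : Filtration ℝ m) (Pfam : Set (Measure Ω))
    (hprob : ∀ P ∈ Pfam, IsProbabilityMeasure P)
    (hpaste : StableUnderPasting F Pfam)
    (ξ : Ω → ℝ) (hξ : ∀ P ∈ Pfam, Integrable ξ P)
    (P' : Measure Ω) (hP' : P' ∈ Pfam)
    (τ : Ω → ℝ) (hτ : IsStoppingTime F (fun ω => (τ ω : WithTop ℝ)))
    (P1 : Measure Ω) (hP1 : P1 ∈ MeasSet Pfam hτ P')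
    (P2 : Measure Ω) (hP2 : P2 ∈ MeasSet Pfam hτ P') :
    ∃ Pt ∈ MeasSet Pfam hτ P',
      (fun ω => max ((P1[ξ|hτ.measurableSpace]) ω) ((P2[ξ|hτ.measurableSpace]) ω))
        =ᵐ[P'] Pt[ξ|hτ.measurableSpace] := by
  classical
  have hg1 : StronglyMeasurable[hτ.measurableSpace] (P1[ξ|hτ.measurableSpace]) :=
    stronglyMeasurable_condExp
  have hg2 : StronglyMeasurable[hτ.measurableSpace] (P2[ξ|hτ.measurableSpace]) :=
    stronglyMeasurable_condExp
  have hE := measurableSet_le hg2.measurable hg1.measurable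
  have hPt := hpaste P' hP' τ hτ P1 hP1 P2 hP2 _ hE
  refine ⟨_, hPt, ?_⟩
  have := hprob P1 hP1.1
  have := hprob P2 hP2.1
  rw [max_eq_piecewise_le]
  exact ae_eq_of_forall_measurableSet_eq hτ.measurableSpace_le hPt.2
    (hg1.piecewise hE hg2) stronglyMeasurable_condExp
    (condExp_restrict_add_restrict_compl hτ.measurableSpace_le (hξ P1 hP1.1) (hξ P2 hP2.1) hE)
end
end
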